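/- arXiv:1005.3147 — 6 statements merged into one kernel-verified Lean document; each statement's English description precedes it below -/
import Mathlib

section
/- Let α ∈ Mₙ(S) be a matrix for which there exists γ ∈ Mₙ(S) with α·γ = γ·α = u^d·Iₙ. Let c be an integer with c > 2d and let X ∈ u^c·Mₙ(S). Then there exists Y ∈ Mₙ(S) such that X = Y·α − α·σ(Y). (Hence the σ-conjugacy class of α + X, under conjugation by matrices of the form Iₙ + Y, coincides with that of α; this is the key 'successive approximation' claim in the proof that deformation functors of bounded height have finite tangent space.) -/
/-!
Write `E = uᵐ B` with `m > 2d`. Because `γ α = uᵈ`, the correction `Y = uᵐ⁻ᵈ B γ` solves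
`Y α = E` exactly, and the new error `α σ(Y)` is divisible by `u^{2(m - d)}`, where
`2(m - d) > m`. Starting from `E = X` and iterating, the corrections have growing `u`-adic
valuation, so their sum converges in the `u`-adically complete ring `Mₙ(F⟦u⟧)` and solves
`X = Y α - α σ(Y)`.
-/

open Finset

/-- Completeness and separatedness for the filtration by the right ideals `u ^ N * A`, with
completeness phrased as convergence of series whose `k`-th term lies in `u ^ k * A`. -/
structure PowAdicComplete {A : Type*} [Ring A] (u : A) : Prop where
  haus : ∀ a : A, (∀ N, u ^ N ∣ a) → a = 0
  prec : ∀ y : ℕ → A, (∀ k, u ^ k ∣ y k) → ∃ s, ∀ N, u ^ N ∣ s - ∑ k ∈ range N, y k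

section SuccessiveApproximation

variable {A : Type*} [Ring A] {u : A}

theorem PowAdicComplete.exists_eq_of_pow_dvd (hu : PowAdicComplete u) (L : A →+ A)
    (hL : ∀ N a, u ^ N ∣ a → u ^ N ∣ L a) {c : ℕ}
    (hstep : ∀ m, c ≤ m → ∀ E, u ^ m ∣ E → ∃ Y, u ^ (m - c) ∣ Y ∧ u ^ (m + 1) ∣ E - L Y)
    {X : A} (hX : u ^ c ∣ X) : ∃ Y, L Y = X := by
  choose! f hf using hstep
  let E : ℕ → A := fun k => Nat.rec X (fun k Ek => Ek - L (f (c + k) Ek)) k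
  have hE : ∀ k, u ^ (c + k) ∣ E k := by
    intro k
    induction k with
    | zero => exact hX
    | succ k ih => exact (hf (c + k) (by omega) (E k) ih).2
  have hfE : ∀ k, u ^ k ∣ f (c + k) (E k) := fun k => by
    simpa using (hf (c + k) (by omega) (E k) (hE k)).1
  have hsum : ∀ N, X - L (∑ k ∈ range N, f (c + k) (E k)) = E N := by
    intro N
    induction N with
    | zero => simp [E]
    | succ N ih => rw [sum_range_succ, map_add, ← sub_sub, ih]
  obtain ⟨Y, hY⟩ := hu.prec _ hfE
  refine ⟨Y, (sub_eq_zero.mp (hu.haus _ fun N => ?_)).symm⟩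
  have hsplit : X - L Y = E N - L (Y - ∑ k ∈ range N, f (c + k) (E k)) := by
    rw [map_sub, ← hsum N]
    abel
  rw [hsplit]
  exact dvd_sub ((pow_dvd_pow u (by omega)).trans (hE N)) (hL N _ (hY N))

theorem pow_dvd_mul_left_of_commute (hu : ∀ x, Commute u x) {N : ℕ} {b : A} (c : A)
    (h : u ^ N ∣ b) : u ^ N ∣ c * b := by
  obtain ⟨b, rfl⟩ := h
  exact ⟨c * b, by rw [← mul_assoc, ← mul_assoc, ((hu c).pow_left N).eq]⟩

variable (σ : A →+* A) {α γ : A} {d : ℕ}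

def sigmaConjDiff (α : A) : A →+ A :=
  AddMonoidHom.mulRight α - (AddMonoidHom.mulLeft α).comp σ.toAddMonoidHom

theorem sigmaConjDiff_apply (α Y : A) : sigmaConjDiff σ α Y = Y * α - α * σ Y := rfl

theorem pow_dvd_sigmaConjDiff (hu : ∀ x, Commute u x)
    (hσ : ∀ m a, u ^ m ∣ a → u ^ (2 * m) ∣ σ a) {N : ℕ} {Y : A} (hY : u ^ N ∣ Y) :
    u ^ N ∣ sigmaConjDiff σ α Y :=
  dvd_sub (hY.mul_right α) <|
    pow_dvd_mul_left_of_commute hu α <| (pow_dvd_pow u (by omega)).trans (hσ N Y hY)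

theorem exists_pow_dvd_sub_sigmaConjDiff (hu : ∀ x, Commute u x)
    (hσ : ∀ m a, u ^ m ∣ a → u ^ (2 * m) ∣ σ a) (hγα : γ * α = u ^ d) {m : ℕ} {E : A}
    (hm : 2 * d < m) (hE : u ^ m ∣ E) :
    ∃ Y, u ^ (m - d) ∣ Y ∧ u ^ (m + 1) ∣ E - sigmaConjDiff σ α Y := by
  obtain ⟨B, rfl⟩ := hE
  have hYα : u ^ (m - d) * (B * γ) * α = u ^ m * B := by
    rw [mul_assoc, mul_assoc, hγα, ← ((hu B).pow_left d).eq, ← mul_assoc, ← pow_add,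
      Nat.sub_add_cancel (by omega)]
  refine ⟨u ^ (m - d) * (B * γ), dvd_mul_right _ _, ?_⟩
  rw [sigmaConjDiff_apply, hYα, sub_sub_cancel]
  exact pow_dvd_mul_left_of_commute hu α <|
    (pow_dvd_pow u (by omega)).trans (hσ _ _ (dvd_mul_right _ _))

theorem PowAdicComplete.exists_eq_mul_sub_mul_map (hcompl : PowAdicComplete u)
    (hu : ∀ x, Commute u x) (hσ : ∀ m a, u ^ m ∣ a → u ^ (2 * m) ∣ σ a)
    (hγα : γ * α = u ^ d) {c : ℕ} (hc : 2 * d < c) {X : A} (hX : u ^ c ∣ X) :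
    ∃ Y, X = Y * α - α * σ Y := by
  obtain ⟨Y, hY⟩ := hcompl.exists_eq_of_pow_dvd (sigmaConjDiff σ α)
    (fun _ _ => pow_dvd_sigmaConjDiff σ hu hσ)
    (fun m hm E hE => (exists_pow_dvd_sub_sigmaConjDiff σ hu hσ hγα (by omega) hE).imp
      fun Y hY => ⟨(pow_dvd_pow u (by omega)).trans hY.1, hY.2⟩) hX
  exact ⟨Y, hY.symm⟩

end SuccessiveApproximation

section AdicComplete

variable {S : Type*} [CommRing S] {x : S}

theorem Ideal.mem_span_singleton_pow_smul_top {N : ℕ} {a : S} :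
    a ∈ (Ideal.span {x} ^ N • ⊤ : Submodule S S) ↔ x ^ N ∣ a := by
  rw [smul_eq_mul, Ideal.mul_top, Ideal.span_singleton_pow, Ideal.mem_span_singleton]

theorem PowAdicComplete.of_isAdicComplete [IsAdicComplete (Ideal.span {x}) S] :
    PowAdicComplete x where
  haus a ha := IsHausdorff.haus' (I := Ideal.span {x}) a fun N => by
    rw [SModEq.zero, Ideal.mem_span_singleton_pow_smul_top]
    exact ha N
  prec y hy := by
    obtain ⟨s, hs⟩ := IsPrecomplete.prec' (I := Ideal.span {x}) (fun N => ∑ k ∈ range N, y k)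
      fun {m n} hmn => by
        rw [SModEq.sub_mem, Ideal.mem_span_singleton_pow_smul_top, ← neg_sub, dvd_neg,
          ← sum_Ico_eq_sub _ hmn]
        exact dvd_sum fun k hk => (pow_dvd_pow x (mem_Ico.mp hk).1).trans (hy k)
    refine ⟨s, fun N => ?_⟩
    rw [← dvd_neg, neg_sub, ← Ideal.mem_span_singleton_pow_smul_top, ← SModEq.sub_mem]
    exact hs N

end AdicComplete

theorem pow_mul_dvd_map_of_pow_dvd {S : Type*} [CommSemiring S] (σ : S →+* S) {x : S}
    {q m : ℕ} (hσ : x ^ q ∣ σ x) {a : S} (ha : x ^ m ∣ a) : x ^ (q * m) ∣ σ a := by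
  rw [pow_mul]
  exact (pow_dvd_pow_of_dvd hσ m).trans (map_pow σ x m ▸ map_dvd σ ha)

namespace Matrix

variable {ι S : Type*} [Fintype ι] [DecidableEq ι]

theorem scalar_dvd_iff [Semiring S] {a : S} {M : Matrix ι ι S} :
    scalar ι a ∣ M ↔ ∀ i j, a ∣ M i j := by
  constructor
  · rintro ⟨B, rfl⟩ i j
    exact ⟨B i j, by simp [scalar_apply, diagonal_mul]⟩
  · intro h
    choose B hB using h
    exact ⟨of B, by ext i j; simp [scalar_apply, diagonal_mul, hB i j]⟩

theorem scalar_pow_dvd_iff [Semiring S] {a : S} {N : ℕ} {M : Matrix ι ι S} :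
    scalar ι a ^ N ∣ M ↔ ∀ i j, a ^ N ∣ M i j := by
  rw [← map_pow, scalar_dvd_iff]

theorem _root_.PowAdicComplete.matrix_scalar [Ring S] {x : S} (h : PowAdicComplete x) :
    PowAdicComplete (scalar ι x) where
  haus M hM := by
    ext i j
    exact h.haus _ fun N => scalar_pow_dvd_iff.mp (hM N) i j
  prec y hy := by
    choose s hs using fun i j =>
      h.prec (fun k => y k i j) fun k => scalar_pow_dvd_iff.mp (hy k) i j
    refine ⟨of s, fun N => scalar_pow_dvd_iff.mpr fun i j => ?_⟩
    simpa [sum_apply] using hs i j N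

theorem exists_eq_mul_sub_mul_map [CommRing S] {x : S} [IsAdicComplete (Ideal.span {x}) S]
    (σ : S →+* S) (hσ : x ^ 2 ∣ σ x) {α γ : Matrix ι ι S} {d c : ℕ}
    (hγα : γ * α = x ^ d • 1) (hc : 2 * d < c) (Z : Matrix ι ι S) :
    ∃ Y, x ^ c • Z = Y * α - α * Y.map σ := by
  have hscalar : ∀ m, x ^ m • (1 : Matrix ι ι S) = scalar ι x ^ m := fun m => by
    rw [← map_pow, scalar_apply, smul_one_eq_diagonal]
  refine PowAdicComplete.of_isAdicComplete.matrix_scalar.exists_eq_mul_sub_mul_map σ.mapMatrix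
    (scalar_commute x fun r => Commute.all x r) (fun m M hM => ?_) (hγα.trans (hscalar d)) hc
    ⟨Z, by rw [← hscalar, smul_mul, one_mul]⟩
  rw [scalar_pow_dvd_iff] at hM ⊢
  exact fun i j => pow_mul_dvd_map_of_pow_dvd σ hσ (hM i j)

end Matrix

theorem PowerSeries.map_X_eq_X_pow {R : Type*} [CommSemiring R] {p : ℕ} (hp : p ≠ 0)
    {σ : PowerSeries R →+* PowerSeries R}
    (hσ : ∀ (f : PowerSeries R) (n : ℕ), PowerSeries.coeff n (σ f) =
      if p ∣ n then (PowerSeries.coeff (n / p) f) ^ p else 0) :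
    σ PowerSeries.X = PowerSeries.X ^ p := by
  ext n
  rw [hσ, PowerSeries.coeff_X_pow, PowerSeries.coeff_X]
  split_ifs with hdvd hquot heq heq hquot
  · exact one_pow p
  · exact absurd (by rw [← Nat.div_mul_cancel hdvd, hquot, one_mul]) heq
  · exact absurd (by rw [heq, Nat.div_self (Nat.pos_of_ne_zero hp)]) hquot
  · exact zero_pow hp
  · exact absurd (hquot ▸ dvd_rfl) hdvd
  · rfl

theorem stmt0_general (p : ℕ) (hp : p.Prime) (F : Type*) [Field F]
    (σ : PowerSeries F →+* PowerSeries F)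
    (hσ : ∀ (f : PowerSeries F) (n : ℕ), PowerSeries.coeff n (σ f) =
      if p ∣ n then (PowerSeries.coeff (n / p) f) ^ p else 0)
    (n d c : ℕ) (hc : 2 * d < c)
    (α γ X : Matrix (Fin n) (Fin n) (PowerSeries F))
    (hγα : γ * α = (PowerSeries.X ^ d : PowerSeries F) • (1 : Matrix (Fin n) (Fin n) (PowerSeries F)))
    (hX : ∃ Z : Matrix (Fin n) (Fin n) (PowerSeries F),
      X = (PowerSeries.X ^ c : PowerSeries F) • Z) :
    ∃ Y : Matrix (Fin n) (Fin n) (PowerSeries F),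
      X = Y * α - α * (Y.map σ) := by
  obtain ⟨Z, rfl⟩ := hX
  have hσX : (PowerSeries.X : PowerSeries F) ^ 2 ∣ σ PowerSeries.X := by
    rw [PowerSeries.map_X_eq_X_pow hp.ne_zero hσ]
    exact pow_dvd_pow _ hp.two_le
  exact Matrix.exists_eq_mul_sub_mul_map σ hσX hγα hc Z

/-- Successive approximation: if `α` has an "inverse up to `u^d`", `c > 2d`, and `X` is
divisible by `u^c`, then `X = Y·α − α·σ(Y)` for some `Y`, where `σ` is the Frobenius
endomorphism of `S = F[[u]]` given by `σ(Σ aᵢ uⁱ) = Σ aᵢᵖ u^{ip}`. -/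
theorem stmt0 (p : ℕ) (hp : p.Prime) (F : Type*) [Field F] [CharP F p]
    (σ : PowerSeries F →+* PowerSeries F)
    (hσ : ∀ (f : PowerSeries F) (n : ℕ), PowerSeries.coeff n (σ f) =
      if p ∣ n then (PowerSeries.coeff (n / p) f) ^ p else 0)
    (n d c : ℕ) (hn : 1 ≤ n) (hd : 1 ≤ d) (hc : 2 * d < c)
    (α γ X : Matrix (Fin n) (Fin n) (PowerSeries F))
    (hαγ : α * γ = (PowerSeries.X ^ d : PowerSeries F) • (1 : Matrix (Fin n) (Fin n) (PowerSeries F)))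
    (hγα : γ * α = (PowerSeries.X ^ d : PowerSeries F) • (1 : Matrix (Fin n) (Fin n) (PowerSeries F)))
    (hX : ∃ Z : Matrix (Fin n) (Fin n) (PowerSeries F),
      X = (PowerSeries.X ^ c : PowerSeries F) • Z) :
    ∃ Y : Matrix (Fin n) (Fin n) (PowerSeries F),
      X = Y * α - α * (Y.map σ) :=
  stmt0_general p hp F σ hσ n d c hc α γ X hγα hX
end

section
/- Suppose x ∈ K, m ≥ 1, c₁, …, c_m ∈ k, and n₁ < n₂ < … < n_m are positive integers each coprime to p, such that xᵖ − x = Σᵢ cᵢ·u^{−nᵢ} in K. Then cᵢ = 0 for all i. Consequently, the classes of u^{−n} for positive integers n coprime to p are 𝔽_p-linearly independent in K/℘(K) where ℘(x) = xᵖ − x, so Hom_cont(Gal(K^sep/K), 𝔽_p) is infinite. (This shows the unrestricted deformation functor of a G_{K_∞}-representation has infinite-dimensional tangent space.) -/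
/-!
If `x` has a pole, then `xᵖ` dominates `x`, so `xᵖ - x` has order `p · ord x`, divisible by `p`;
if `x` has no pole, neither has `xᵖ - x`. But a nonzero combination `Σ cᵢ u^{-nᵢ}` has order
`-nᵢ` for some `i`, which is negative and prime to `p`.
-/

namespace HahnSeries

section

variable {Γ R : Type*} [AddCommMonoid Γ] [LinearOrder Γ] [IsOrderedCancelAddMonoid Γ]
  [Ring R] [NoZeroDivisors R]

theorem order_pow_sub_self_nonneg {x : R⟦Γ⟧} (hx : 0 ≤ x.order) (n : ℕ) :
    0 ≤ (x ^ n - x).order := by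
  rcases eq_or_ne (x ^ n - x) 0 with h | h
  · rw [h, order_zero]
  · rw [sub_eq_add_neg] at h ⊢
    refine le_trans ?_ (min_order_le_order_add h)
    rw [order_pow, order_neg]
    exact le_min (nsmul_nonneg hx n) hx

theorem order_pow_sub_self_of_order_neg {x : R⟦Γ⟧} (hx : x.order < 0) {n : ℕ} (hn : 2 ≤ n) :
    (x ^ n - x).order = n • x.order := by
  have hx0 : x ≠ 0 := by rintro rfl; simp at hx
  have hlt : n • x.order < x.order := by
    obtain ⟨k, rfl⟩ := Nat.exists_eq_add_of_le' hn
    rw [succ_nsmul]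
    exact add_lt_of_neg_left _ (nsmul_neg hx (by omega))
  have hpow : (x ^ n).orderTop = ↑(n • x.order) := by
    rw [orderTop_of_ne_zero (pow_ne_zero n hx0), ← order_of_ne (pow_ne_zero n hx0), order_pow]
  have hsub := orderTop_sub (x := x ^ n) (y := x) (by
    rw [hpow, orderTop_of_ne_zero hx0, ← order_of_ne hx0]; exact WithTop.coe_lt_coe.2 hlt)
  rw [hpow] at hsub
  have hne : x ^ n - x ≠ 0 := by
    rintro h
    rw [h, orderTop_zero] at hsub
    exact WithTop.top_ne_coe hsub
  rw [orderTop_of_ne_zero hne, ← order_of_ne hne] at hsub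
  exact WithTop.coe_injective hsub

theorem order_pow_sub_self_eq_nsmul {x : R⟦Γ⟧} {n : ℕ} (hn : 2 ≤ n) (h : (x ^ n - x).order < 0) :
    (x ^ n - x).order = n • x.order := by
  refine order_pow_sub_self_of_order_neg (not_le.1 fun hx => ?_) hn
  exact h.not_ge (order_pow_sub_self_nonneg hx n)

end

section

variable {Γ R ι : Type*} [AddCommMonoid R]

theorem exists_order_sum_single_eq [Zero Γ] [LinearOrder Γ] {s : Finset ι} {e : ι → Γ}
    {c : ι → R}
    (h : ∑ i ∈ s, single (e i) (c i) ≠ 0) :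
    ∃ i ∈ s, (∑ i ∈ s, single (e i) (c i)).order = e i := by
  have hcoeff := coeff_order_eq_zero.not.2 h
  rw [coeff_sum] at hcoeff
  obtain ⟨i, hi, hne⟩ := Finset.exists_ne_zero_of_sum_ne_zero hcoeff
  exact ⟨i, hi, not_imp_comm.1 coeff_single_of_ne hne⟩

theorem coeff_sum_single_apply [PartialOrder Γ] [Fintype ι] {e : ι → Γ} (he : e.Injective)
    (c : ι → R) (j : ι) :
    (∑ i, single (e i) (c i)).coeff (e j) = c j := by
  rw [coeff_sum, Finset.sum_eq_single j (fun i _ hij => coeff_single_of_ne (he.ne hij).symm)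
    (by simp), coeff_single_same]

end

end HahnSeries

theorem stmt6_general (p : ℕ) (hp : p.Prime) (k : Type*) [Field k]
    (x : LaurentSeries k) (m : ℕ)
    (c : Fin m → k) (nn : Fin m → ℕ)
    (hpos : ∀ i, 0 < nn i) (hcop : ∀ i, ¬ p ∣ nn i)
    (hmono : StrictMono nn)
    (heq : x ^ p - x = ∑ i : Fin m, HahnSeries.single (-(nn i : ℤ)) (c i)) :
    ∀ i, c i = 0 := by
  by_contra! ⟨i₀, hi₀⟩
  have hinj : Function.Injective fun i => -(nn i : ℤ) :=
    fun i j h => hmono.injective (by simpa using h)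
  have hne : x ^ p - x ≠ 0 := fun h => hi₀ <| by
    rw [← HahnSeries.coeff_sum_single_apply hinj c i₀, ← heq, h, HahnSeries.coeff_zero]
  obtain ⟨j, -, hj⟩ := HahnSeries.exists_order_sum_single_eq (heq ▸ hne)
  rw [← heq] at hj
  have hneg : (x ^ p - x).order < 0 := by
    rw [hj]
    exact neg_neg_of_pos (Int.natCast_pos.2 (hpos j))
  have hord := HahnSeries.order_pow_sub_self_eq_nsmul hp.two_le hneg
  rw [hj, nsmul_eq_mul] at hord
  exact hcop j (Int.natCast_dvd_natCast.1 ⟨-x.order, by linarith⟩)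

/-- Artin–Schreier independence: if `xᵖ − x = Σᵢ cᵢ u^{−nᵢ}` in `k((u))` with the `nᵢ`
positive, strictly increasing, and coprime to `p`, then all `cᵢ = 0`. -/
theorem stmt6 (p : ℕ) (hp : p.Prime) (k : Type*) [Field k] [CharP k p]
    (x : LaurentSeries k) (m : ℕ) (hm : 1 ≤ m)
    (c : Fin m → k) (nn : Fin m → ℕ)
    (hpos : ∀ i, 0 < nn i) (hcop : ∀ i, ¬ p ∣ nn i)
    (hmono : StrictMono nn)
    (heq : x ^ p - x = ∑ i : Fin m, HahnSeries.single (-(nn i : ℤ)) (c i)) :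
    ∀ i, c i = 0 :=
  stmt6_general p hp k x m c nn hpos hcop hmono heq
end

section
/- In the ring k[[π₀]][[u]], the element π₀ − u₀ factors as π₀ − u₀ = v·Q, where v is a unit of k[[π₀]][[u]] and Q ∈ k[[π₀]][u] is an Eisenstein polynomial in u of degree e over k[[π₀]]: Q is monic of degree e in u, all coefficients of uⁱ for i < e lie in the ideal (π₀), and the constant coefficient is π₀ times a unit (in particular it does not lie in (π₀²)). -/
/-!
Since `π₀ − u₀` reduces modulo `π₀` to `−u₀`, whose `u`-adic order is `e`, the Weierstrass
preparation theorem over the complete local ring `k[[π₀]]` writes it as a distinguished polynomial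
`Q` of degree `e` times a unit `v`. Comparing constant terms, `Q(0) · v(0) = π₀`, so `Q` is
Eisenstein.
-/

open IsLocalRing

namespace PowerSeries

instance isAdicComplete_maximalIdeal (k : Type*) [Field k] :
    IsAdicComplete (maximalIdeal k⟦X⟧) k⟦X⟧ := by
  rw [maximalIdeal_eq_span_X]
  infer_instance

theorem mem_maximalIdeal_iff_constantCoeff_eq_zero {k : Type*} [Field k] {φ : k⟦X⟧} :
    φ ∈ maximalIdeal k⟦X⟧ ↔ constantCoeff φ = 0 := by
  rw [maximalIdeal_eq_span_X, Ideal.mem_span_singleton, X_dvd_iff]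

theorem order_map_residue_eq_iff {A : Type*} [CommRing A] [IsLocalRing A] {g : A⟦X⟧} {n : ℕ} :
    (g.map (residue A)).order = n ↔
      IsUnit (coeff n g) ∧ ∀ i < n, coeff i g ∈ maximalIdeal A := by
  simp only [order_eq_nat, coeff_map, residue_ne_zero_iff_isUnit, residue_eq_zero_iff]

theorem IsWeierstrassFactorizationAt.coeff_zero_mul_constantCoeff {A : Type*} [CommRing A]
    {g : A⟦X⟧} {f : Polynomial A} {h : A⟦X⟧} {I : Ideal A}
    (H : g.IsWeierstrassFactorizationAt f h I) :
    f.coeff 0 * constantCoeff h = constantCoeff g := by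
  rw [H.eq_mul, map_mul, Polynomial.constantCoeff_coe]

end PowerSeries

open PowerSeries

/-- In `k[[π₀]][[u]]`, the element `π₀ − u₀` (where `u₀ ∈ k[[u]]` has `ord_u(u₀) = e ≥ 1`)
factors as a unit times an Eisenstein polynomial in `u` of degree `e` over `k[[π₀]]`. -/
theorem stmt10 (k : Type*) [Field k] (e : ℕ) (he : 1 ≤ e)
    (a : ℕ → k) (hlt : ∀ i < e, a i = 0) (hne : a e ≠ 0) :
    ∃ (v : PowerSeries (PowerSeries k)) (Q : Polynomial (PowerSeries k)),
      IsUnit v ∧ Q.Monic ∧ Q.natDegree = e ∧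
      (∀ i < e, PowerSeries.constantCoeff (Q.coeff i) = 0) ∧
      (∃ w : PowerSeries k, IsUnit w ∧ Q.coeff 0 = PowerSeries.X * w) ∧
      PowerSeries.C (PowerSeries.X : PowerSeries k) -
          PowerSeries.mk (fun i => PowerSeries.C (a i)) =
        v * (Q : PowerSeries (PowerSeries k)) := by
  set g : k⟦X⟧⟦X⟧ := C X - mk fun i => C (a i)
  have hcoeff : ∀ i, coeff i g = (if i = 0 then X else 0) - C (a i) := by
    intro i
    simp [g, coeff_C]
  have hord : (g.map (residue k⟦X⟧)).order = e := by
    refine order_map_residue_eq_iff.2 ⟨?_, fun i hi => ?_⟩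
    · rw [isUnit_iff_constantCoeff, hcoeff, if_neg (by omega)]
      simpa using hne
    · rw [mem_maximalIdeal_iff_constantCoeff_eq_zero, hcoeff, hlt i hi]
      split_ifs <;> simp
  obtain ⟨Q, v, H⟩ := exists_isWeierstrassFactorization (g := g)
    (order_finite_iff_ne_zero.1 (hord ▸ ENat.natCast_lt_top e))
  have hdeg : Q.natDegree = e := by rw [H.natDegree_eq_toNat_order_map, hord]; rfl
  have hQ0 : Q.coeff 0 * constantCoeff v = X := by
    rw [H.coeff_zero_mul_constantCoeff, ← coeff_zero_eq_constantCoeff_apply, hcoeff,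
      hlt 0 he]
    simp
  refine ⟨v, Q, H.isUnit, H.isDistinguishedAt.monic, hdeg, fun i hi => ?_, ?_, ?_⟩
  · exact mem_maximalIdeal_iff_constantCoeff_eq_zero.1 (H.isDistinguishedAt.mem (hdeg ▸ hi))
  · obtain ⟨c, hc⟩ := isUnit_constantCoeff v H.isUnit
    exact ⟨↑c⁻¹, c⁻¹.isUnit, by rw [← hQ0, ← hc, mul_assoc, Units.mul_inv, mul_one]⟩
  · rw [H.eq_mul, mul_comm]
end

section
/- Let N ⊆ B be a B₀-submodule such that N ⊆ u^e·B and u^e·N is contained in the B₀-span of {xᵖ : x ∈ N}. Then N = 0. (This is the distilled form of the mod-p vanishing lemma used to compare lattices constructed from Kisin modules and from strongly divisible modules when p > 2: inductively N ⊆ u^{e'}B implies N ⊆ u^{pe'−e}B, and pe' − e > e' since p > 2.) -/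
/-- Mod-`p` vanishing lemma (`p > 2`): if `N ⊆ u^e·B` is a `B₀`-submodule with
`u^e·N` contained in the `B₀`-span of the `p`-th powers of elements of `N`, then `N = 0`. -/
theorem stmt11 (p : ℕ) (hp : 2 < p) (hprime : p.Prime)
    (B : Type*) [CommRing B] [CharP B p]
    (B₀ : Subring B) (e : ℕ) (he : 1 ≤ e)
    (u : B) (hu : u ∈ B₀)
    (hreg : u ∈ nonZeroDivisors B)
    (hsep : ∀ x : B, (∀ n : ℕ, ∃ y : B, x = u ^ n * y) → x = 0)
    (N : AddSubgroup B)
    (hNsmul : ∀ b ∈ B₀, ∀ x ∈ N, b * x ∈ N)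
    (hNdiv : ∀ x ∈ N, ∃ y : B, x = u ^ e * y)
    (hNspan : ∀ x ∈ N, u ^ e * x ∈
      AddSubgroup.closure {z : B | ∃ b ∈ B₀, ∃ y ∈ N, z = b * y ^ p}) :
    ∀ x ∈ N, x = 0 := by
  -- Step: if everything in N is divisible by u^k (with k ≥ e), then by u^(p*k - e).
  have step : ∀ k : ℕ, e ≤ k → (∀ x ∈ N, u ^ k ∣ x) → ∀ x ∈ N, u ^ (p * k - e) ∣ x := by
    intro k hk hdiv x hx
    have hmem := hNspan x hx
    have hle : AddSubgroup.closure {z : B | ∃ b ∈ B₀, ∃ y ∈ N, z = b * y ^ p}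
        ≤ (Ideal.span {u ^ (p * k)}).toAddSubgroup := by
      rw [AddSubgroup.closure_le]
      rintro z ⟨b, hb, y, hy, rfl⟩
      have h1 : u ^ k ∣ y := hdiv y hy
      have h2 : u ^ (p * k) ∣ y ^ p := by
        rw [mul_comm p k, pow_mul]
        exact pow_dvd_pow_of_dvd h1 p
      have : u ^ (p * k) ∣ b * y ^ p := h2.mul_left b
      simpa [Ideal.mem_span_singleton] using this
    have hdvd : u ^ (p * k) ∣ u ^ e * x := by
      have := hle hmem
      simpa [Ideal.mem_span_singleton] using this
    obtain ⟨w, hw⟩ := hdvd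
    refine ⟨w, ?_⟩
    have hek : e ≤ p * k := hk.trans (Nat.le_mul_of_pos_left k (by omega))
    have hcancel : u ^ e * x = u ^ e * (u ^ (p * k - e) * w) := by
      rw [hw, ← mul_assoc, ← pow_add]
      congr 2
      omega
    exact (mul_cancel_left_mem_nonZeroDivisors (pow_mem hreg e)).mp hcancel
  -- Iterate: define k_m with k_0 = e, k_{m+1} = p*k_m - e, and k_m ≥ e + m.
  have main : ∀ m : ℕ, ∃ k : ℕ, e + m ≤ k ∧ ∀ x ∈ N, u ^ k ∣ x := by
    intro m
    induction m with
    | zero => exact ⟨e, by omega, fun x hx => (hNdiv x hx).imp fun y hy => hy⟩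
    | succ n ih =>
      obtain ⟨k, hk, hdiv⟩ := ih
      refine ⟨p * k - e, ?_, step k (by omega) hdiv⟩
      have : 3 * k ≤ p * k := Nat.mul_le_mul_right k (by omega)
      omega
  intro x hx
  apply hsep
  intro n
  obtain ⟨k, hk, hdiv⟩ := main n
  obtain ⟨y, hy⟩ := hdiv x hx
  exact ⟨u ^ (k - n) * y, by rw [hy, ← mul_assoc, ← pow_add]; congr 2; omega⟩
end

section
/- Suppose there exists c ≥ 0 such that u^c·Sⁿ is contained in the image of X (as an S-linear map Sⁿ → Sⁿ). Then: (1) there exists Y ∈ Mₙ(S) with X·Y = Y·X = u^c·Iₙ; (2) det(X) is a nonzerodivisor in S, so X: Sⁿ → Sⁿ is injective; (3) the cokernel Sⁿ/X·Sⁿ is a flat A-module. (This is the statement that for a φ-module of height ≤ h with coefficients in A, the map φ is injective and its cokernel is A-flat.) -/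
/-!
Column by column, the hypothesis gives `Y` with `X Y = u^c`. Then `det X · det Y = u^(cn)` is a
nonzerodivisor, hence so is `det X`; this makes `X` injective and turns `X (Y X) = X u^c` into
`Y X = u^c`.

The cokernel is even a projective `A`-module. Applying `Y` and then dividing by `u^c` is an
`A`-linear retraction of `X`, so the cokernel is an `A`-linear direct summand of `Sⁿ`; since
`u^c Sⁿ ⊆ X Sⁿ`, truncation below degree `c` exhibits it as a retract of the free module `A[u]ⁿ`.
-/

open scoped nonZeroDivisors

namespace PowerSeries

variable {R : Type*}

noncomputable def divXPow [Semiring R] (k : ℕ) : R⟦X⟧ →ₗ[R] R⟦X⟧ where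
  toFun f := mk fun d => coeff (d + k) f
  map_add' f g := by ext; simp
  map_smul' r f := by ext; simp

@[simp]
lemma divXPow_X_pow_mul [Semiring R] (k : ℕ) (f : R⟦X⟧) : divXPow k (X ^ k * f) = f := by
  ext d
  simp [divXPow, coeff_X_pow_mul]

lemma X_pow_dvd_sub_trunc [Ring R] (k : ℕ) (f : R⟦X⟧) : X ^ k ∣ f - (trunc k f : R⟦X⟧) := by
  rw [X_pow_dvd_iff]
  intro m hm
  simp [coeff_trunc, hm]

lemma X_pow_mem_nonZeroDivisors [CommRing R] (k : ℕ) : (X ^ k : R⟦X⟧) ∈ R⟦X⟧⁰ :=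
  mem_nonZeroDivisors_iff_right.2 fun φ h => X_pow_mul_injective (by simpa [mul_comm] using h)

end PowerSeries

namespace Matrix

variable {n R : Type*} [Fintype n] [DecidableEq n] [CommRing R]

lemma exists_mul_eq_smul_one_of_forall_mulVec (X : Matrix n n R) (s : R)
    (h : ∀ v, ∃ w, X *ᵥ w = s • v) : ∃ Y, X * Y = s • 1 := by
  choose W hW using h
  refine ⟨(Matrix.of fun j => W (Pi.single j 1))ᵀ, ext_of_mulVec_single fun j => ?_⟩
  rw [← mulVec_mulVec, mulVec_single_one]
  ext i
  simp [hW, Pi.single_apply, one_apply, eq_comm]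

lemma det_mem_nonZeroDivisors_of_mul_eq_smul_one {X Y : Matrix n n R} {s : R} (hs : s ∈ R⁰)
    (h : X * Y = s • 1) : X.det ∈ R⁰ := by
  have : X.det * Y.det = s ^ Fintype.card n := by
    rw [← det_mul, h, det_smul, det_one, mul_one]
  exact (mul_mem_nonZeroDivisors.1 (this ▸ pow_mem hs _)).1

lemma mul_eq_smul_one_comm {X Y : Matrix n n R} {s : R} (hX : X.det ∈ R⁰)
    (h : X * Y = s • 1) : Y * X = s • 1 := by
  refine ext_iff_mulVec.2 fun v => mulVec_injective_of_det_mem_nonZeroDivisors hX ?_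
  simp only [mulVec_mulVec, ← Matrix.mul_assoc, h]
  simp

end Matrix

theorem Module.Projective.quotient_range_of_leftInverse {R Q P F : Type*} [CommRing R]
    [AddCommGroup Q] [Module R Q] [AddCommGroup P] [Module R P] [AddCommGroup F] [Module R F]
    [Module.Projective R F] (f : Q →ₗ[R] P) (g : P →ₗ[R] Q) (hgf : g ∘ₗ f = LinearMap.id)
    (π : P →ₗ[R] F) (ι : F →ₗ[R] P) (hι : ∀ v, v - ι (π v) ∈ LinearMap.range f) :
    Module.Projective R (P ⧸ LinearMap.range f) := by
  let e : P →ₗ[R] P := LinearMap.id - f ∘ₗ g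
  have he : LinearMap.range f ≤ LinearMap.ker (π ∘ₗ e) := by
    rintro _ ⟨w, rfl⟩
    have : g (f w) = w := LinearMap.congr_fun hgf w
    simp [e, this]
  refine .of_split ((LinearMap.range f).liftQ _ he) ((LinearMap.range f).mkQ ∘ₗ ι) ?_
  refine Submodule.linearMap_qext _ (LinearMap.ext fun v => ?_)
  simp only [LinearMap.comp_apply, Submodule.mkQ_apply, Submodule.liftQ_apply, LinearMap.id_apply]
  have hev : e v - v ∈ LinearMap.range f := ⟨-g v, by simp [e]⟩
  exact (Submodule.Quotient.eq _).2 <| by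
    simpa only [sub_sub_sub_cancel_left] using sub_mem hev (hι (e v))

open Matrix PowerSeries in
theorem Matrix.projective_quotient_range_mulVecLin {A n : Type*} [CommRing A] [Fintype n]
    [DecidableEq n] {M N : Matrix n n A⟦X⟧} {c : ℕ} (hMN : M * N = (X ^ c : A⟦X⟧) • 1)
    (hNM : N * M = (X ^ c : A⟦X⟧) • 1) :
    Module.Projective A ((n → A⟦X⟧) ⧸ LinearMap.range (M.mulVecLin.restrictScalars A)) := by
  refine .quotient_range_of_leftInverse _
    ((divXPow c).compLeft n ∘ₗ N.mulVecLin.restrictScalars A) ?_ ((trunc c).compLeft n)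
    ((Polynomial.coeToPowerSeries.algHom A).toLinearMap.compLeft n) fun v => ?_
  · refine LinearMap.ext fun w => funext fun i => ?_
    simp [mulVec_mulVec, hNM, smul_mulVec]
  · choose r hr using fun i => X_pow_dvd_sub_trunc c (v i)
    refine ⟨N *ᵥ r, funext fun i => ?_⟩
    simp [mulVec_mulVec, hMN, smul_mulVec, hr]

theorem stmt12_general (A : Type*) [CommRing A] (n : ℕ)
    (X : Matrix (Fin n) (Fin n) (PowerSeries A)) (c : ℕ)
    (hc : ∀ v : Fin n → PowerSeries A, ∃ w : Fin n → PowerSeries A,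
      X.mulVec w = (PowerSeries.X ^ c : PowerSeries A) • v) :
    (∃ Y : Matrix (Fin n) (Fin n) (PowerSeries A),
        X * Y = (PowerSeries.X ^ c : PowerSeries A) • (1 : Matrix (Fin n) (Fin n) (PowerSeries A)) ∧
        Y * X = (PowerSeries.X ^ c : PowerSeries A) • (1 : Matrix (Fin n) (Fin n) (PowerSeries A))) ∧
    X.det ∈ nonZeroDivisors (PowerSeries A) ∧
    Function.Injective (X.mulVec : (Fin n → PowerSeries A) → (Fin n → PowerSeries A)) ∧
    Module.Flat A ((Fin n → PowerSeries A) ⧸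
      LinearMap.range (LinearMap.restrictScalars A (Matrix.mulVecLin X))) := by
  obtain ⟨Y, hXY⟩ := X.exists_mul_eq_smul_one_of_forall_mulVec _ hc
  have hdet : X.det ∈ nonZeroDivisors (PowerSeries A) :=
    Matrix.det_mem_nonZeroDivisors_of_mul_eq_smul_one (PowerSeries.X_pow_mem_nonZeroDivisors c) hXY
  have hYX := Matrix.mul_eq_smul_one_comm hdet hXY
  have := Matrix.projective_quotient_range_mulVecLin hXY hYX
  exact ⟨⟨Y, hXY, hYX⟩, hdet, Matrix.mulVec_injective_of_det_mem_nonZeroDivisors hdet,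
    inferInstance⟩

/-- If `u^c·Sⁿ ⊆ X·Sⁿ` for `S = A[[u]]`, then `X` has an inverse up to `u^c`, `det X` is a
nonzerodivisor (so `X` is injective), and the cokernel of `X` is flat over `A`. -/
theorem stmt12 (A : Type*) [CommRing A] (n : ℕ) (hn : 1 ≤ n)
    (X : Matrix (Fin n) (Fin n) (PowerSeries A)) (c : ℕ)
    (hc : ∀ v : Fin n → PowerSeries A, ∃ w : Fin n → PowerSeries A,
      X.mulVec w = (PowerSeries.X ^ c : PowerSeries A) • v) :
    (∃ Y : Matrix (Fin n) (Fin n) (PowerSeries A),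
        X * Y = (PowerSeries.X ^ c : PowerSeries A) • (1 : Matrix (Fin n) (Fin n) (PowerSeries A)) ∧
        Y * X = (PowerSeries.X ^ c : PowerSeries A) • (1 : Matrix (Fin n) (Fin n) (PowerSeries A))) ∧
    X.det ∈ nonZeroDivisors (PowerSeries A) ∧
    Function.Injective (X.mulVec : (Fin n → PowerSeries A) → (Fin n → PowerSeries A)) ∧
    Module.Flat A ((Fin n → PowerSeries A) ⧸
      LinearMap.range (LinearMap.restrictScalars A (Matrix.mulVecLin X))) :=
  stmt12_general A n X c hc
end

section
/- Let 𝔐 ⊆ M be an 𝔖-submodule such that φ(𝔐) ⊆ 𝔐, Pʰ·𝔐 is contained in the 𝔖-span of φ(𝔐), and the 𝒪-span of 𝔐 equals M. Then the image 𝔐'' := f(𝔐) ⊆ M'' satisfies the same three properties: φ''(𝔐'') ⊆ 𝔐'', Pʰ·𝔐'' is contained in the 𝔖-span of φ''(𝔐''), and the 𝒪-span of 𝔐'' equals M''. (This is the 'schematic closure' step in the proof that quotients of torsion representations of height ≤ h are of height ≤ h.) -/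
/-- Schematic closure: the image under a surjective `φ`-compatible map of an `𝔖`-submodule
of height ≤ h generating `M` over `𝒪` has the same three properties. -/
theorem stmt14 (O : Type*) [CommRing O] (S : Subring O) (σ : O →+* O)
    (hσS : ∀ s ∈ S, σ s ∈ S) (P : O) (hP : P ∈ S) (h : ℕ)
    (M M'' : Type*) [AddCommGroup M] [Module O M] [AddCommGroup M''] [Module O M'']
    (φ : M →+ M) (hφ : ∀ (r : O) (m : M), φ (r • m) = σ r • φ m)
    (φ'' : M'' →+ M'') (hφ'' : ∀ (r : O) (m : M''), φ'' (r • m) = σ r • φ'' m)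
    (f : M →ₗ[O] M'') (hf : Function.Surjective f)
    (hcomm : ∀ m : M, f (φ m) = φ'' (f m))
    (𝔐 : AddSubgroup M)
    (hsmul : ∀ s ∈ S, ∀ m ∈ 𝔐, s • m ∈ 𝔐)
    (hstab : ∀ m ∈ 𝔐, φ m ∈ 𝔐)
    (hht : ∀ m ∈ 𝔐, P ^ h • m ∈
      AddSubgroup.closure {x : M | ∃ s ∈ S, ∃ m' ∈ 𝔐, x = s • φ m'})
    (hgen : Submodule.span O (𝔐 : Set M) = ⊤) :
    (∀ s ∈ S, ∀ y ∈ 𝔐.map f.toAddMonoidHom, s • y ∈ 𝔐.map f.toAddMonoidHom) ∧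
    (∀ y ∈ 𝔐.map f.toAddMonoidHom, φ'' y ∈ 𝔐.map f.toAddMonoidHom) ∧
    (∀ y ∈ 𝔐.map f.toAddMonoidHom, P ^ h • y ∈
      AddSubgroup.closure {x : M'' | ∃ s ∈ S, ∃ m' ∈ 𝔐.map f.toAddMonoidHom, x = s • φ'' m'}) ∧
    Submodule.span O ((𝔐.map f.toAddMonoidHom : AddSubgroup M'') : Set M'') = ⊤ := by
  refine ⟨?_, ?_, ?_, ?_⟩
  · rintro s hs y ⟨m, hm, rfl⟩
    exact ⟨s • m, hsmul s hs m hm, f.map_smul s m⟩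
  · rintro y ⟨m, hm, rfl⟩
    exact ⟨φ m, hstab m hm, hcomm m⟩
  · rintro y ⟨m, hm, rfl⟩
    have : f (P ^ h • m) = P ^ h • f m := f.map_smul _ m
    rw [show (P ^ h • (f.toAddMonoidHom m) : M'') = f.toAddMonoidHom (P ^ h • m) from
      (f.map_smul _ m).symm]
    have hmap := AddSubgroup.mem_map_of_mem f.toAddMonoidHom (hht m hm)
    rw [AddMonoidHom.map_closure] at hmap
    refine AddSubgroup.closure_mono ?_ hmap
    rintro x ⟨z, ⟨s, hs, m', hm', rfl⟩, rfl⟩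
    refine ⟨s, hs, f m', ⟨m', hm', rfl⟩, ?_⟩
    simp only [LinearMap.toAddMonoidHom_coe]
    rw [f.map_smul, hcomm]
  · rw [eq_top_iff]
    rintro x -
    obtain ⟨m, rfl⟩ := hf x
    have hm : m ∈ Submodule.span O (𝔐 : Set M) := hgen ▸ Submodule.mem_top
    have : f m ∈ Submodule.map f (Submodule.span O (𝔐 : Set M)) :=
      Submodule.mem_map_of_mem hm
    rw [Submodule.map_span] at this
    refine Submodule.span_mono ?_ this
    rintro x ⟨m', hm', rfl⟩
    exact ⟨m', hm', rfl⟩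
end
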